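/- A body-time manifold presents a uniform remodeling if, and only if, the mechanical response factors through a single constitutive map up to a field of material isomorphisms: all pairs of ℝ × B are pairwise materially isomorphic if and only if there exist a map W̄ : GL(3,ℝ) → V and a map P : ℝ × B → GL(3,ℝ) such that W (s,Y) F = W̄ (F * P (s,Y)) for all (s,Y) ∈ ℝ × B and all F ∈ GL(3,ℝ). (Here B is assumed nonempty.) -/

import Mathlib

/- Fixing a base point `p₀`, the response at `p₀` serves as `W̄`, and the isomorphisms
from `p₀` give the field `P`; conversely `P q * (P p)⁻¹` is an isomorphism from `p` to `q`. -/

abbrev GL3 := Matrix.GeneralLinearGroup (Fin 3) ℝ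

section MaterialIsomorphism

variable {X G V : Type*} [Group G]

def MateriallyIsomorphic (W : X → G → V) (p q : X) : Prop :=
  ∃ P : G, ∀ F : G, W p (F * P) = W q F

theorem MateriallyIsomorphic.of_factorization {W : X → G → V} {Wbar : G → V} {P : X → G}
    (hW : ∀ p F, W p F = Wbar (F * P p)) (p q : X) : MateriallyIsomorphic W p q :=
  ⟨P q * (P p)⁻¹, fun F => by rw [hW p, hW q, mul_assoc, inv_mul_cancel_right]⟩

theorem exists_factorization_of_materiallyIsomorphic {W : X → G → V} {p₀ : X}
    (h : ∀ q, MateriallyIsomorphic W p₀ q) :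
    ∃ (Wbar : G → V) (P : X → G), ∀ p F, W p F = Wbar (F * P p) := by
  choose P hP using h
  exact ⟨W p₀, P, fun q F => (hP q F).symm⟩

theorem materiallyIsomorphic_iff_exists_factorization [Nonempty X] (W : X → G → V) :
    (∀ p q, MateriallyIsomorphic W p q) ↔
      ∃ (Wbar : G → V) (P : X → G), ∀ p F, W p F = Wbar (F * P p) :=
  ⟨fun h => exists_factorization_of_materiallyIsomorphic (h (Classical.arbitrary X)),
    fun ⟨_, _, hW⟩ => MateriallyIsomorphic.of_factorization hW⟩

end MaterialIsomorphism

/-- A body-time manifold presents a uniform remodeling (all pairs of `ℝ × B` are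
pairwise materially isomorphic) if, and only if, there exist a map `W̄ : GL(3,ℝ) → V`
and a map `P : ℝ × B → GL(3,ℝ)` such that `W (s,Y) F = W̄ (F * P (s,Y))` for all
`(s,Y)` and all `F`. -/
theorem uniform_remodeling_iff_factorization {B V : Type*} [Nonempty B]
    (W : ℝ × B → GL3 → V) :
    (∀ p q : ℝ × B, ∃ P : GL3, ∀ F : GL3, W p (F * P) = W q F) ↔
      (∃ (Wbar : GL3 → V) (P : ℝ × B → GL3),
        ∀ (p : ℝ × B) (F : GL3), W p F = Wbar (F * P p)) :=
  materiallyIsomorphic_iff_exists_factorization W
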